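/- Let j be an odd positive integer, let a be an even positive integer, and let σ ∈ S_{ja} be a permutation whose cycle type is (j^a). Then M(σ) = j^{a/2}·(a−1)·(a−3)⋯3·1, i.e. the number of fixed-point-free involutions of S_{ja} commuting with σ equals j^{a/2} times the double factorial (a−1)!!. -/

import Mathlib

/-!
Transport `σ` to the model permutation `(i, x) ↦ (i, x + 1)` of `Fin a × ZMod j`, which has the
same cycle type. A permutation commuting with the model is a shear `(i, x) ↦ (τ i, x + c i)`,
and the shear is a fixed-point-free involution iff `τ` is one and `c ∘ τ = -c`: a fixed point
of `τ` would force `c i = -c i`, hence `c i = 0` since `j` is odd. There are `(a - 1)‼` such `τ`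
(the permutations of cycle type `2^(a/2)`), and for each of them `c` is free on one point of
every pair of `τ`, giving `j^(a/2)` choices.
-/

open scoped Nat

noncomputable section

/-- `numMatchings σ` is the number of fixed-point-free involutions `m` (i.e. `m * m = 1` and
`m x ≠ x` for all `x`) that commute with `σ`; equivalently, the number of matchings of the `k`
points preserved by `σ`. -/
def numMatchings {k : ℕ} (σ : Equiv.Perm (Fin k)) : ℕ :=
  Nat.card {m : Equiv.Perm (Fin k) // m * m = 1 ∧ (∀ x, m x ≠ x) ∧ m * σ = σ * m}

open Equiv Finset

def IsFixedPointFreeInvolution {α : Type*} (m : Perm α) : Prop :=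
  m * m = 1 ∧ ∀ x, m x ≠ x

theorem numMatchings_eq_card {k : ℕ} (σ : Perm (Fin k)) :
    numMatchings σ =
      Nat.card {m : Perm (Fin k) // IsFixedPointFreeInvolution m ∧ Commute m σ} :=
  Nat.card_congr (Equiv.subtypeEquivRight fun _ => and_assoc.symm)

section Transport

variable {α β : Type*} (e : α ≃ β)

theorem isFixedPointFreeInvolution_permCongr_iff {m : Perm α} :
    IsFixedPointFreeInvolution (e.permCongr m) ↔ IsFixedPointFreeInvolution m := by
  rw [IsFixedPointFreeInvolution, IsFixedPointFreeInvolution, ← e.permCongrHom_coe, ← map_mul,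
    map_eq_one_iff _ e.permCongrHom.injective, e.surjective.forall]
  simp

theorem commute_permCongr_iff {m σ : Perm α} :
    Commute (e.permCongr m) (e.permCongr σ) ↔ Commute m σ := by
  rw [commute_iff_eq, commute_iff_eq, ← e.permCongrHom_coe, ← map_mul, ← map_mul,
    e.permCongrHom.injective.eq_iff]

theorem card_commute_permCongr (σ : Perm α) :
    Nat.card {m : Perm β // IsFixedPointFreeInvolution m ∧ Commute m (e.permCongr σ)} =
      Nat.card {m : Perm α // IsFixedPointFreeInvolution m ∧ Commute m σ} :=
  Nat.card_congr (e.permCongr.subtypeEquiv fun _ => by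
    rw [isFixedPointFreeInvolution_permCongr_iff, commute_permCongr_iff]).symm

end Transport

section Count

variable {α : Type*} [Fintype α] [DecidableEq α]

theorem isFixedPointFreeInvolution_iff_cycleType {k : ℕ} (hk : Fintype.card α = 2 * k)
    {τ : Perm α} : IsFixedPointFreeInvolution τ ↔ τ.cycleType = Multiset.replicate k 2 := by
  have : Fact (Nat.Prime 2) := ⟨Nat.prime_two⟩
  have hsupp : (∀ x, τ x ≠ x) ↔ τ.cycleType.sum = Fintype.card α := by
    rw [Perm.sum_cycleType, Finset.card_eq_iff_eq_univ, Finset.eq_univ_iff_forall]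
    simp only [Perm.mem_support]
  rw [IsFixedPointFreeInvolution, ← sq, Perm.pow_prime_eq_one_iff, hsupp, Multiset.eq_replicate]
  constructor
  · rintro ⟨h2, hsum⟩
    refine ⟨?_, h2⟩
    rw [Multiset.eq_replicate_card.mpr h2, Multiset.sum_replicate, smul_eq_mul] at hsum
    lia
  · rintro ⟨hcard, h2⟩
    refine ⟨h2, ?_⟩
    rw [Multiset.eq_replicate_card.mpr h2, Multiset.sum_replicate, smul_eq_mul, hcard, hk]
    ring

theorem Nat.factorial_eq_doubleFactorial_mul : ∀ n : ℕ, n ! = n‼ * (n - 1)‼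
  | 0 => rfl
  | n + 1 => Nat.factorial_eq_mul_doubleFactorial n

theorem card_isFixedPointFreeInvolution (h : Even (Fintype.card α)) :
    Nat.card {τ : Perm α // IsFixedPointFreeInvolution τ} = (Fintype.card α - 1)‼ := by
  classical
  obtain ⟨k, hk⟩ := h
  rw [← two_mul] at hk
  have hprod : ∏ n ∈ (Multiset.replicate k 2).toFinset, ((Multiset.replicate k 2).count n)! =
      k ! := by
    rw [Multiset.toFinset_replicate]
    split_ifs with hk0 <;> simp [hk0]
  -- orbit-stabilizer: the centralizer of a permutation of cycle type `2^k` has order `2^k * k!`,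
  -- and `(2k)! = 2^k * k! * (2k - 1)‼`
  have hcount : #{g : Perm α | g.cycleType = Multiset.replicate k 2} * (2 ^ k * k !) =
      2 ^ k * k ! * (2 * k - 1)‼ := by
    have := Perm.card_of_cycleType_mul_eq α (Multiset.replicate k 2)
    rwa [if_pos ⟨by simp [hk, mul_comm], fun a ha => (Multiset.eq_of_mem_replicate ha).ge⟩,
      hprod, Multiset.sum_replicate, Multiset.prod_replicate, hk, smul_eq_mul, mul_comm k 2,
      Nat.sub_self, Nat.factorial_zero, one_mul, Nat.factorial_eq_doubleFactorial_mul (2 * k),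
      Nat.doubleFactorial_two_mul] at this
  rw [Nat.card_eq_fintype_card, Fintype.card_subtype, hk]
  simp_rw [isFixedPointFreeInvolution_iff_cycleType hk]
  exact Nat.eq_of_mul_eq_mul_right (by positivity) (hcount.trans (mul_comm _ _))

end Count

section Shear

variable {ι G : Type*} [AddCommGroup G]

def shearPerm (τ : Perm ι) (c : ι → G) : Perm (ι × G) :=
  Equiv.prodShear τ fun i => Equiv.addRight (c i)

@[simp]
theorem shearPerm_apply (τ : Perm ι) (c : ι → G) (p : ι × G) :
    shearPerm τ c p = (τ p.1, p.2 + c p.1) :=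
  rfl

theorem shearPerm_injective :
    Function.Injective fun p : Perm ι × (ι → G) => shearPerm p.1 p.2 := by
  rintro ⟨τ, c⟩ ⟨τ', c'⟩ h
  have h' (i : ι) := congrFun (congrArg DFunLike.coe h) (i, 0)
  simp only [shearPerm_apply, Prod.mk.injEq, zero_add] at h'
  exact Prod.ext (Equiv.ext fun i => (h' i).1) (funext fun i => (h' i).2)

theorem shearPerm_mul_self_eq_one_iff {τ : Perm ι} {c : ι → G} :
    shearPerm τ c * shearPerm τ c = 1 ↔ τ * τ = 1 ∧ ∀ i, c (τ i) = -c i := by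
  have hpt (i : ι) (x : G) :
      (shearPerm τ c * shearPerm τ c) (i, x) = (τ (τ i), x + (c i + c (τ i))) := by
    simp [add_assoc]
  simp only [Perm.ext_iff, Prod.forall, hpt, Perm.mul_apply, Perm.one_apply, Prod.mk.injEq,
    add_eq_left, eq_neg_iff_add_eq_zero, add_comm (c (τ _))]
  exact ⟨fun h => ⟨fun i => (h i 0).1, fun i => (h i 0).2⟩, fun h i _ => ⟨h.1 i, h.2 i⟩⟩

theorem isFixedPointFreeInvolution_shearPerm_iff (hG : ∀ g : G, -g = g → g = 0)
    {τ : Perm ι} {c : ι → G} :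
    IsFixedPointFreeInvolution (shearPerm τ c) ↔
      IsFixedPointFreeInvolution τ ∧ ∀ i, c (τ i) = -c i := by
  rw [IsFixedPointFreeInvolution, IsFixedPointFreeInvolution, shearPerm_mul_self_eq_one_iff]
  constructor
  · rintro ⟨⟨hττ, hc⟩, hfree⟩
    refine ⟨⟨hττ, fun i hi => hfree (i, 0) ?_⟩, hc⟩
    have hci : c i = 0 := hG _ (by rw [← hc i, hi])
    simp [hi, hci]
  · rintro ⟨⟨hττ, hfree⟩, hc⟩
    exact ⟨⟨hττ, hc⟩, fun p hp => hfree p.1 (congrArg Prod.fst hp)⟩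

end Shear

section AntiInvariant

variable {ι G : Type*} [InvolutiveNeg G] {τ : Perm ι}

theorem IsFixedPointFreeInvolution.apply_apply (hτ : IsFixedPointFreeInvolution τ) (i : ι) :
    τ (τ i) = i := by
  rw [← Perm.mul_apply, hτ.1, Perm.one_apply]

theorem IsFixedPointFreeInvolution.not_lt_iff [LinearOrder ι] (hτ : IsFixedPointFreeInvolution τ)
    (i : ι) : ¬i < τ i ↔ τ i < τ (τ i) := by
  rw [not_lt, hτ.apply_apply, (hτ.2 i).le_iff_lt]

theorem IsFixedPointFreeInvolution.card_lt_apply [Fintype ι] [LinearOrder ι]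
    (hτ : IsFixedPointFreeInvolution τ) :
    Fintype.card {i // i < τ i} = Fintype.card ι / 2 := by
  have hswap : Fintype.card {i // ¬i < τ i} = Fintype.card {i // i < τ i} :=
    Fintype.card_congr (τ.subtypeEquiv hτ.not_lt_iff)
  have hcompl := Fintype.card_subtype_compl fun i => i < τ i
  have hle := Fintype.card_subtype_le fun i => i < τ i
  omega

def IsFixedPointFreeInvolution.antiInvariantEquiv [LinearOrder ι]
    (hτ : IsFixedPointFreeInvolution τ) :
    {c : ι → G // ∀ i, c (τ i) = -c i} ≃ ({i // i < τ i} → G) where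
  toFun c i := c.1 i
  invFun f :=
    ⟨fun i => if h : i < τ i then f ⟨i, h⟩ else -f ⟨τ i, (hτ.not_lt_iff i).1 h⟩, by
    intro i
    by_cases h : i < τ i
    · have h' : ¬τ i < τ (τ i) := by rw [hτ.apply_apply]; exact lt_asymm h
      simp only [dif_neg h', dif_pos h, neg_inj]
      congr 2
      exact hτ.apply_apply i
    · simp [dif_pos ((hτ.not_lt_iff i).1 h), dif_neg h]⟩
  left_inv c := by
    ext i
    by_cases h : i < τ i
    · simp [dif_pos h]
    · simp [dif_neg h, c.2 i]
  right_inv f := by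
    ext ⟨i, h⟩
    simp [dif_pos h]

theorem IsFixedPointFreeInvolution.card_antiInvariant [Fintype ι] [Fintype G]
    (hτ : IsFixedPointFreeInvolution τ) :
    Nat.card {c : ι → G // ∀ i, c (τ i) = -c i} = Nat.card G ^ (Fintype.card ι / 2) := by
  let : LinearOrder ι := LinearOrder.lift' (Fintype.equivFin ι) (Fintype.equivFin ι).injective
  rw [Nat.card_congr hτ.antiInvariantEquiv, Nat.card_fun,
    Nat.card_eq_fintype_card (α := {i // _}), hτ.card_lt_apply]

end AntiInvariant

section Shift

variable (ι : Type*) (j : ℕ)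

def shiftPerm : Perm (ι × ZMod j) :=
  shearPerm 1 1

variable {ι j}

theorem shiftPerm_pow_apply (n : ℕ) (i : ι) (x : ZMod j) :
    (shiftPerm ι j ^ n) (i, x) = (i, x + n) := by
  induction n with
  | zero => simp
  | succ n ih => rw [pow_succ', Perm.mul_apply, ih]; simp [shiftPerm, add_assoc]

theorem commute_shearPerm_shiftPerm (τ : Perm ι) (c : ι → ZMod j) :
    Commute (shearPerm τ c) (shiftPerm ι j) := by
  ext ⟨i, x⟩ <;> simp [shiftPerm, add_right_comm]

theorem exists_shearPerm_eq_of_commute [NeZero j] {m : Perm (ι × ZMod j)}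
    (hm : Commute m (shiftPerm ι j)) : ∃ τ c, shearPerm τ c = m := by
  set τ : ι → ι := fun i => (m (i, 0)).1
  set c : ι → ZMod j := fun i => (m (i, 0)).2
  -- `m` is determined by its values on `ι × {0}`, which the powers of the shift sweep out
  have hm_apply (i : ι) (x : ZMod j) : m (i, x) = (τ i, x + c i) := by
    have h := congrArg (· (i, 0)) ((hm.pow_right x.val).eq)
    simp only [Perm.mul_apply, shiftPerm_pow_apply, zero_add, ZMod.natCast_zmod_val] at h
    rw [h, ← Prod.mk.eta (p := m (i, 0)), shiftPerm_pow_apply, ZMod.natCast_zmod_val, add_comm]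
  have hinj : Function.Injective τ := fun i k h => by
    have h' : m (i, c k - c i) = m (k, 0) := by rw [hm_apply, hm_apply, h, sub_add_cancel, zero_add]
    exact congrArg Prod.fst (m.injective h')
  have hsurj : Function.Surjective τ := fun k =>
    ⟨(m.symm (k, 0)).1, by
      have := hm_apply (m.symm (k, 0)).1 (m.symm (k, 0)).2
      rw [Prod.mk.eta, Equiv.apply_symm_apply] at this
      exact (congrArg Prod.fst this).symm⟩
  exact ⟨Equiv.ofBijective τ ⟨hinj, hsurj⟩, c, Equiv.ext fun p => (hm_apply p.1 p.2).symm⟩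

theorem ZMod.eq_zero_of_neg_eq_self (hj : Odd j) {x : ZMod j} (hx : -x = x) : x = 0 :=
  ((ZMod.neg_eq_self_iff x).1 hx).resolve_right fun h =>
    Nat.not_even_iff_odd.2 hj ⟨x.val, by omega⟩

theorem card_commute_shiftPerm [Fintype ι] (hj : Odd j) :
    Nat.card {m : Perm (ι × ZMod j) //
        IsFixedPointFreeInvolution m ∧ Commute m (shiftPerm ι j)} =
      Nat.card {τ : Perm ι // IsFixedPointFreeInvolution τ} * j ^ (Fintype.card ι / 2) := by
  classical
  have : NeZero j := ⟨hj.pos.ne'⟩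
  let shear
      (p : {p : Perm ι × (ι → ZMod j) // IsFixedPointFreeInvolution (shearPerm p.1 p.2)}) :
      {m : Perm (ι × ZMod j) // IsFixedPointFreeInvolution m ∧ Commute m (shiftPerm ι j)} :=
    ⟨shearPerm p.1.1 p.1.2, p.2, commute_shearPerm_shiftPerm _ _⟩
  have hshear : Function.Bijective shear := by
    refine ⟨fun p q h => Subtype.ext (shearPerm_injective (congrArg Subtype.val h)), ?_⟩
    rintro ⟨m, hfree, hm⟩
    obtain ⟨τ, c, rfl⟩ := exists_shearPerm_eq_of_commute hm
    exact ⟨⟨(τ, c), hfree⟩, rfl⟩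
  let split : {p : Perm ι × (ι → ZMod j) //
        IsFixedPointFreeInvolution p.1 ∧ ∀ i, p.2 (p.1 i) = -p.2 i} ≃
      Σ τ : {τ : Perm ι // IsFixedPointFreeInvolution τ},
        {c : ι → ZMod j // ∀ i, c (τ.1 i) = -c i} :=
    { toFun p := ⟨⟨p.1.1, p.2.1⟩, p.1.2, p.2.2⟩
      invFun q := ⟨(q.1.1, q.2.1), q.1.2, q.2.2⟩ }
  rw [← Nat.card_eq_of_bijective shear hshear,
    Nat.card_congr (Equiv.subtypeEquivRight fun p =>
      isFixedPointFreeInvolution_shearPerm_iff (fun _ => ZMod.eq_zero_of_neg_eq_self hj)),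
    Nat.card_congr split, Nat.card_sigma]
  rw [Finset.sum_congr rfl fun τ _ => τ.2.card_antiInvariant]
  simp [Nat.card_eq_fintype_card]

end Shift

section CycleType

variable {α β : Type*} [Fintype α] [DecidableEq α] [Fintype β] [DecidableEq β]

theorem Equiv.Perm.cycleType_permCongr (e : α ≃ β) (σ : Perm α) :
    (e.permCongr σ).cycleType = σ.cycleType := by
  have h : e.permCongr σ =
      σ.extendDomain (e.trans (Equiv.subtypeUnivEquiv fun _ => trivial).symm) :=
    Equiv.ext fun b => by
      rw [Perm.extendDomain_apply_subtype _ _ trivial]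
      simp [Equiv.subtypeUnivEquiv, Equiv.permCongr_apply]
  rw [h, Perm.cycleType_extendDomain]

theorem Equiv.Perm.exists_permCongr_eq_of_cycleType_eq (e : α ≃ β) {σ : Perm α} {τ : Perm β}
    (h : σ.cycleType = τ.cycleType) : ∃ D : α ≃ β, D.permCongr σ = τ := by
  obtain ⟨g, rfl⟩ := isConj_iff.1
    (Perm.isConj_iff_cycleType_eq.2 ((Perm.cycleType_permCongr e σ).trans h))
  exact ⟨e.trans g, by rw [← Equiv.permCongr_eq_mul]; rfl⟩

theorem Equiv.Perm.cycleType_eq_replicate_of_card_support_cycleOf {σ : Perm α} {j : ℕ}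
    (hj : 2 ≤ j) (h : ∀ x, #(σ.cycleOf x).support = j) :
    σ.cycleType = Multiset.replicate (Fintype.card α / j) j := by
  have hmem : ∀ n ∈ σ.cycleType, n = j := by
    intro n hn
    rw [Perm.cycleType_def, Multiset.mem_map] at hn
    obtain ⟨c, hc, rfl⟩ := hn
    obtain ⟨x, hx⟩ := (Perm.mem_cycleFactorsFinset_iff.1 hc).1.nonempty_support
    rw [Function.comp_apply, Perm.cycle_is_cycleOf hx hc, h]
  have hsum : σ.cycleType.sum = Fintype.card α := by
    rw [Perm.sum_cycleType, Finset.card_eq_iff_eq_univ, Finset.eq_univ_iff_forall]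
    intro x
    rw [Perm.mem_support, ← Perm.two_le_card_support_cycleOf_iff, h]
    exact hj
  rw [Multiset.eq_replicate_card.2 hmem, Multiset.sum_replicate, smul_eq_mul] at hsum
  rw [Multiset.eq_replicate_card.2 hmem, ← hsum, Nat.mul_div_cancel _ (by omega)]

end CycleType

section ShiftCycleType

variable {ι α : Type*} [Fintype ι] [Fintype α] [DecidableEq α] {j : ℕ}

theorem sameCycle_shiftPerm_iff [NeZero j] {p q : ι × ZMod j} :
    (shiftPerm ι j).SameCycle p q ↔ p.1 = q.1 := by
  constructor
  · intro h
    obtain ⟨n, -, hn⟩ := h.exists_pow_eq'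
    rw [← hn, ← Prod.mk.eta (p := p), shiftPerm_pow_apply]
  · obtain ⟨i, x⟩ := p
    obtain ⟨k, y⟩ := q
    rintro (rfl : i = k)
    refine ⟨((y - x).val : ℤ), ?_⟩
    rw [zpow_natCast, shiftPerm_pow_apply, ZMod.natCast_zmod_val, add_sub_cancel]

variable [DecidableEq ι]

theorem card_support_cycleOf_shiftPerm [NeZero j] (hj : 2 ≤ j) (p : ι × ZMod j) :
    #((shiftPerm ι j).cycleOf p).support = j := by
  have : Fact (1 < j) := ⟨hj⟩
  have hmoves : shiftPerm ι j p ≠ p := by simp [shiftPerm, Prod.ext_iff]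
  have hsupp : ((shiftPerm ι j).cycleOf p).support = {p.1} ×ˢ Finset.univ := by
    ext q
    simp only [Perm.mem_support_cycleOf_iff' hmoves, sameCycle_shiftPerm_iff, Finset.mem_product,
      Finset.mem_singleton, Finset.mem_univ, and_true, eq_comm]
  rw [hsupp, Finset.card_product, Finset.card_singleton, Finset.card_univ, ZMod.card, one_mul]

theorem cycleType_shiftPerm [NeZero j] :
    (shiftPerm ι j).cycleType = (Multiset.replicate (Fintype.card ι) j).filter (2 ≤ ·) := by
  obtain rfl | hj := (Nat.one_le_iff_ne_zero.2 (NeZero.ne j)).eq_or_lt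
  · have : shiftPerm ι 1 = 1 := Equiv.ext fun p => Prod.ext rfl (Subsingleton.elim _ _)
    rw [this, Perm.cycleType_one, eq_comm, Multiset.filter_eq_nil]
    intro n hn
    rw [Multiset.eq_of_mem_replicate hn]
    decide
  · rw [Perm.cycleType_eq_replicate_of_card_support_cycleOf hj (card_support_cycleOf_shiftPerm hj),
      Multiset.filter_eq_self.2 fun n hn => (Multiset.eq_of_mem_replicate hn).symm ▸ hj,
      Fintype.card_prod, ZMod.card, Nat.mul_div_cancel _ (by omega)]

theorem exists_permCongr_shiftPerm_eq [NeZero j] {σ : Perm α}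
    (hσ : σ.partition.parts = Multiset.replicate (Fintype.card ι) j) :
    ∃ D : ι × ZMod j ≃ α, D.permCongr (shiftPerm ι j) = σ := by
  have hcard : Fintype.card (ι × ZMod j) = Fintype.card α := by
    rw [← σ.partition.parts_sum, hσ, Multiset.sum_replicate, smul_eq_mul, Fintype.card_prod,
      ZMod.card]
  refine Perm.exists_permCongr_eq_of_cycleType_eq (Fintype.equivOfCardEq hcard) ?_
  rw [cycleType_shiftPerm, ← hσ, Perm.filter_parts_partition_eq_cycleType]

end ShiftCycleType

theorem statement5_general (j a : ℕ) (hj : Odd j) (ha : Even a)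
    (σ : Equiv.Perm (Fin (j * a))) (hσ : σ.partition.parts = Multiset.replicate a j) :
    numMatchings σ = j ^ (a / 2) * (a - 1)‼ := by
  have : NeZero j := ⟨hj.pos.ne'⟩
  obtain ⟨D, rfl⟩ :=
    exists_permCongr_shiftPerm_eq (ι := Fin a) (hσ.trans (by rw [Fintype.card_fin]))
  rw [numMatchings_eq_card, card_commute_permCongr, card_commute_shiftPerm hj,
    card_isFixedPointFreeInvolution (by rwa [Fintype.card_fin]), Fintype.card_fin, mul_comm]

/-- If `j` is odd, `a` is even and `σ` has cycle type `(j^a)`, then the number of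
fixed-point-free involutions commuting with `σ` is `j^(a/2) * (a-1)‼`. -/
theorem statement5 (j a : ℕ) (hj0 : 0 < j) (ha0 : 0 < a) (hj : Odd j) (ha : Even a)
    (σ : Equiv.Perm (Fin (j * a))) (hσ : σ.partition.parts = Multiset.replicate a j) :
    numMatchings σ = j ^ (a / 2) * (a - 1)‼ :=
  statement5_general j a hj ha σ hσ
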